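/- arXiv:2302.09168 — 3 statements merged into one kernel-verified Lean document; each statement's English description precedes it below -/
import Mathlib

section
/- Let F : [a,b] → [0,1] be a C² cumulative distribution function with density f satisfying f(θ) ≥ β₁ > 0 and f'(θ) ≥ -β₂ for all θ ∈ [a,b]. Then for any integer n ≥ 2 + β₂/β₁², the function θ ↦ F(θ)^(n-1) is convex on [a,b]. -/
/-!
Since `β₂ > 0` forces `n ≥ 3`, write `n - 1 = m + 2`. The second derivative of `F ^ (m + 2)` is
`(m + 2) F ^ m ((m + 1) f ^ 2 + F f')`, and as `0 ≤ F ≤ 1` on `[a, b]`,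
`(m + 1) f ^ 2 + F f' ≥ (n - 2) β₁ ^ 2 - β₂ ≥ 0`.
-/

open Set

theorem HasDerivAt.pow_add_two_deriv {F f : ℝ → ℝ} {x d : ℝ} (m : ℕ)
    (hF : HasDerivAt F (f x) x) (hf : HasDerivAt f d x) :
    HasDerivAt (fun y => ((m + 2 : ℕ) : ℝ) * (F y ^ (m + 1) * f y))
      ((m + 2 : ℕ) * F x ^ m * ((m + 1 : ℕ) * f x ^ 2 + F x * d)) x :=
  (((hF.fun_pow (m + 1)).fun_mul hf).const_mul _).congr_deriv (by rw [Nat.add_sub_cancel]; ring)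

theorem convexOn_pow_add_two {D : Set ℝ} (hD : Convex ℝ D) {F f f' : ℝ → ℝ} (m : ℕ)
    (hF : ∀ x ∈ D, HasDerivAt F (f x) x) (hf : ∀ x ∈ interior D, HasDerivAt f (f' x) x)
    (hF₀ : ∀ x ∈ interior D, 0 ≤ F x)
    (hF'' : ∀ x ∈ interior D, 0 ≤ (m + 1 : ℕ) * f x ^ 2 + F x * f' x) :
    ConvexOn ℝ D (fun x => F x ^ (m + 2)) := by
  have hF' : ∀ x ∈ interior D, HasDerivAt F (f x) x := fun x hx => hF x (interior_subset hx)
  refine convexOn_of_hasDerivWithinAt2_nonneg hD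
    (fun x hx => ((hF x hx).continuousAt.pow _).continuousWithinAt)
    (fun x hx => ?_) (fun x hx => ((hF' x hx).pow_add_two_deriv m (hf x hx)).hasDerivWithinAt)
    (fun x hx => by have := hF₀ x hx; have := hF'' x hx; positivity)
  exact ((hF' x hx).fun_pow (m + 2)).hasDerivWithinAt.congr_deriv (mul_assoc _ _ _)

theorem sq_mul_add_mul_nonneg {u v w β₁ β₂ : ℝ} {k : ℕ} (hu : u ∈ Icc (0 : ℝ) 1)
    (hβ₁ : 0 ≤ β₁) (hv : β₁ ≤ v) (hβ₂ : 0 ≤ β₂) (hw : -β₂ ≤ w) (hk : β₂ ≤ k * β₁ ^ 2) :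
    0 ≤ k * v ^ 2 + u * w := by
  have hsq : k * β₁ ^ 2 ≤ k * v ^ 2 := by gcongr
  have huw : -β₂ ≤ u * w := by nlinarith [hu.1, hu.2]
  linarith

theorem stmt_0_general (a b β₁ β₂ : ℝ) (F f f' : ℝ → ℝ) (n : ℕ)
    (hβ₁ : 0 < β₁) (hβ₂ : 0 < β₂)
    (hF : ∀ θ ∈ Set.Icc a b, HasDerivAt F (f θ) θ)
    (hf : ∀ θ ∈ Set.Icc a b, HasDerivAt f (f' θ) θ)
    (hFmono : MonotoneOn F (Set.Icc a b))
    (hFa : F a = 0) (hFb : F b = 1)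
    (hfpos : ∀ θ ∈ Set.Icc a b, β₁ ≤ f θ)
    (hf'lb : ∀ θ ∈ Set.Icc a b, -β₂ ≤ f' θ)
    (hn : (2 : ℝ) + β₂ / β₁ ^ 2 ≤ n) :
    ConvexOn ℝ (Set.Icc a b) (fun θ => F θ ^ (n - 1)) := by
  have hβ : β₂ / β₁ ^ 2 ≤ (n : ℝ) - 2 := by linarith
  obtain ⟨k, rfl⟩ : ∃ k, n = k + 3 := by
    have : (2 : ℝ) < n := by linarith [div_pos hβ₂ (pow_pos hβ₁ 2)]
    exact ⟨n - 3, by norm_cast at this; omega⟩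
  have hk : β₂ ≤ (k + 1 : ℕ) * β₁ ^ 2 := by
    rw [div_le_iff₀ (pow_pos hβ₁ 2)] at hβ
    push_cast at hβ ⊢
    linarith
  have hF01 : ∀ θ ∈ Icc a b, F θ ∈ Icc (0 : ℝ) 1 := fun θ hθ => by
    simpa only [hFa, hFb] using hFmono.mapsTo_Icc hθ
  refine convexOn_pow_add_two (convex_Icc a b) k hF
    (fun θ hθ => hf θ (interior_subset hθ)) (fun θ hθ => (hF01 θ (interior_subset hθ)).1)
    (fun θ hθ => ?_)
  have hθ := interior_subset hθ
  exact sq_mul_add_mul_nonneg (hF01 θ hθ) hβ₁.le (hfpos θ hθ) hβ₂.le (hf'lb θ hθ) hk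

/-- If F is a C² CDF on [a,b] with density f ≥ β₁ > 0 and f' ≥ -β₂,
then for n ≥ 2 + β₂/β₁², the function θ ↦ F(θ)^(n-1) is convex on [a,b]. -/
theorem stmt_0 (a b β₁ β₂ : ℝ) (F f f' : ℝ → ℝ) (n : ℕ)
    (hab : a < b) (hβ₁ : 0 < β₁) (hβ₂ : 0 < β₂)
    (hF : ∀ θ ∈ Set.Icc a b, HasDerivAt F (f θ) θ)
    (hf : ∀ θ ∈ Set.Icc a b, HasDerivAt f (f' θ) θ)
    (hf'cont : ContinuousOn f' (Set.Icc a b))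
    (hFmono : MonotoneOn F (Set.Icc a b))
    (hFa : F a = 0) (hFb : F b = 1)
    (hfpos : ∀ θ ∈ Set.Icc a b, β₁ ≤ f θ)
    (hf'lb : ∀ θ ∈ Set.Icc a b, -β₂ ≤ f' θ)
    (hn : (2 : ℝ) + β₂ / β₁ ^ 2 ≤ n) :
    ConvexOn ℝ (Set.Icc a b) (fun θ => F θ ^ (n - 1)) :=
  stmt_0_general a b β₁ β₂ F f f' n hβ₁ hβ₂ hF hf hFmono hFa hFb hfpos hf'lb hn
end

section
/- Let F : [a,b] → [0,1] be a continuous strictly increasing CDF with F(a)=0, F(b)=1, and let Q : [a,b] → [0,1] be a measurable function. Define the monotone rearrangement Q†(θ) = G⁻¹(F(θ)), where G(z) = ∫_a^b 1[Q(t) ≤ z] dF(t) and G⁻¹ is the generalized inverse. Then ∫_a^b θ·Q†(θ) dF(θ) ≥ ∫_a^b θ·Q(θ) dF(θ). -/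
open MeasureTheory ProbabilityTheory Set
open scoped ENNReal

/-! The rearrangement `Q† = G⁻¹ ∘ F` has the same law as `Q`: because `F` is continuous and
strictly increasing on the support, `F(θ)` is uniformly distributed, and right continuity of `G`
gives `Q† θ ≤ u ↔ F θ ≤ G u`. Applying the layer-cake formula twice,
`∫ (θ - a) R(θ) dF = ∫∫ μ {θ | s < θ - a, u < R θ} ds du`. When `R` is nondecreasing the two sets
`{θ | s < θ - a}` and `{θ | u < R θ}` are both upper sets of `ℝ`, hence nested, so for each `(s, u)`
the measure of their intersection is maximal among all `R` with a given law. Since `Q` and `Q†`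
also have equal means, the shift by `a` does not matter. -/

lemma lintegral_ofReal_mul_eq_lintegral_lintegral_measure_inter {α : Type*} [MeasurableSpace α]
    (μ : Measure α) {f g : α → ℝ} (hf : Measurable f) (hg : Measurable g)
    (hf0 : 0 ≤ᵐ[μ] f) (hg0 : 0 ≤ᵐ[μ] g) :
    ∫⁻ x, ENNReal.ofReal (f x * g x) ∂μ
      = ∫⁻ u in Ioi 0, ∫⁻ s in Ioi 0, μ ({x | s < f x} ∩ {x | u < g x}) := by
  set ν := μ.withDensity fun x => ENNReal.ofReal (f x)
  have hν : ∫⁻ x, ENNReal.ofReal (f x * g x) ∂μ = ∫⁻ x, ENNReal.ofReal (g x) ∂ν := by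
    rw [lintegral_withDensity_eq_lintegral_mul _ hf.ennreal_ofReal hg.ennreal_ofReal]
    refine lintegral_congr_ae ?_
    filter_upwards [hf0] with x hx
    exact ENNReal.ofReal_mul hx
  rw [hν, lintegral_eq_lintegral_meas_lt ν ((withDensity_absolutelyContinuous _ _).ae_le hg0)
    hg.aemeasurable]
  refine setLIntegral_congr_fun measurableSet_Ioi fun u _ => ?_
  rw [withDensity_apply _ (measurableSet_lt measurable_const hg),
    lintegral_eq_lintegral_meas_lt _ (ae_restrict_of_ae hf0) hf.aemeasurable]
  refine setLIntegral_congr_fun measurableSet_Ioi fun s _ => ?_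
  rw [Measure.restrict_apply (measurableSet_lt measurable_const hf)]

section HardyLittlewood

variable {α : Type*} [LinearOrder α] [MeasurableSpace α] {μ : Measure α} {f g h : α → ℝ}

lemma measure_inter_le_measure_inter_of_isUpperSet {s t u : Set α} (hs : IsUpperSet s)
    (ht : IsUpperSet t) (hut : μ u ≤ μ t) : μ (s ∩ u) ≤ μ (s ∩ t) := by
  rcases hs.total ht with hst | hts
  · rw [inter_eq_left.2 hst]
    exact measure_mono inter_subset_left
  · rw [inter_eq_right.2 hts]
    exact (measure_mono inter_subset_right).trans hut

theorem lintegral_ofReal_mul_le_of_monotone (hf_mono : Monotone f) (hh_mono : Monotone h)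
    (hf : Measurable f) (hg : Measurable g) (hh : Measurable h)
    (hf0 : 0 ≤ᵐ[μ] f) (hg0 : 0 ≤ᵐ[μ] g) (hh0 : 0 ≤ᵐ[μ] h)
    (hgh : ∀ u, 0 < u → μ {x | u < g x} ≤ μ {x | u < h x}) :
    ∫⁻ x, ENNReal.ofReal (f x * g x) ∂μ ≤ ∫⁻ x, ENNReal.ofReal (f x * h x) ∂μ := by
  rw [lintegral_ofReal_mul_eq_lintegral_lintegral_measure_inter μ hf hg hf0 hg0,
    lintegral_ofReal_mul_eq_lintegral_lintegral_measure_inter μ hf hh hf0 hh0]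
  refine setLIntegral_mono' measurableSet_Ioi fun u hu => lintegral_mono fun s => ?_
  exact measure_inter_le_measure_inter_of_isUpperSet
    (fun x y hxy hx => hx.trans_le (hf_mono hxy)) (fun x y hxy hx => hx.trans_le (hh_mono hxy))
    (hgh u hu)

theorem integral_mul_le_of_monotone (hf_mono : Monotone f) (hh_mono : Monotone h)
    (hf : Measurable f) (hg : Measurable g) (hh : Measurable h)
    (hf0 : 0 ≤ᵐ[μ] f) (hg0 : 0 ≤ᵐ[μ] g) (hh0 : 0 ≤ᵐ[μ] h)
    (hgh : ∀ u, 0 < u → μ {x | u < g x} ≤ μ {x | u < h x})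
    (hfh : Integrable (fun x => f x * h x) μ) :
    ∫ x, f x * g x ∂μ ≤ ∫ x, f x * h x ∂μ := by
  have hfg0 : 0 ≤ᵐ[μ] fun x => f x * g x := by
    filter_upwards [hf0, hg0] with x hfx hgx using mul_nonneg hfx hgx
  have hfh0 : 0 ≤ᵐ[μ] fun x => f x * h x := by
    filter_upwards [hf0, hh0] with x hfx hhx using mul_nonneg hfx hhx
  rw [integral_eq_lintegral_of_nonneg_ae hfg0 (hf.mul hg).aestronglyMeasurable,
    integral_eq_lintegral_of_nonneg_ae hfh0 hfh.aestronglyMeasurable]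
  exact ENNReal.toReal_mono hfh.lintegral_lt_top.ne
    (lintegral_ofReal_mul_le_of_monotone hf_mono hh_mono hf hg hh hf0 hg0 hh0 hgh)

end HardyLittlewood

/-- `G⁻¹` of the paper. As a real `sInf`, it is `0` when the set is empty or unbounded below. -/
noncomputable def generalizedInverse (G : ℝ → ℝ) (c : ℝ) : ℝ := sInf {z | c ≤ G z}

lemma generalizedInverse_le_iff {G : ℝ → ℝ} {c u : ℝ} (hG : Monotone G)
    (hGu : ContinuousWithinAt G (Ici u) u) (hne : {z | c ≤ G z}.Nonempty)
    (hbdd : BddBelow {z | c ≤ G z}) : generalizedInverse G c ≤ u ↔ c ≤ G u := by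
  refine ⟨fun h => ?_, fun h => csInf_le hbdd h⟩
  have hright : ∀ z ∈ Ioi u, c ≤ G z := fun z hz => by
    obtain ⟨w, hw, hwz⟩ := (csInf_lt_iff hbdd hne).1 (h.trans_lt hz)
    exact hw.trans (hG hwz.le)
  exact ge_of_tendsto (hGu.mono Ioi_subset_Ici_self) (eventually_nhdsWithin_of_forall hright)

section UnitInterval

variable {ν : Measure ℝ}

lemma generalizedInverse_cdf_of_nonpos {c : ℝ} (hc : c ≤ 0) :
    generalizedInverse (cdf ν) c = 0 := by
  have : {z | c ≤ cdf ν z} = univ := eq_univ_of_forall fun z => hc.trans (cdf_nonneg ν z)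
  rw [generalizedInverse, this, Real.sInf_univ]

variable [IsProbabilityMeasure ν]

lemma cdf_eq_zero_of_neg (hν : ν (Icc 0 1)ᶜ = 0) {z : ℝ} (hz : z < 0) : cdf ν z = 0 := by
  have : ν (Iic z) = 0 :=
    measure_mono_null (fun x (hx : x ≤ z) (hx01 : x ∈ Icc 0 1) => (hx01.1.trans hx).not_gt hz) hν
  rw [cdf_eq_real, measureReal_def, this, ENNReal.toReal_zero]

lemma cdf_one_eq_one (hν : ν (Icc 0 1)ᶜ = 0) : cdf ν 1 = 1 := by
  have : ν (Iic 1) = 1 :=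
    (prob_compl_eq_zero_iff measurableSet_Iic).1 (measure_mono_null
      (compl_subset_compl.2 fun x hx => hx.2) hν)
  rw [cdf_eq_real, measureReal_def, this, ENNReal.toReal_one]

lemma setOf_le_cdf_subset_Ici (hν : ν (Icc 0 1)ᶜ = 0) {c : ℝ} (hc : 0 < c) :
    {z | c ≤ cdf ν z} ⊆ Ici 0 := fun z hz => by
  by_contra hz0
  exact hc.not_ge (cdf_eq_zero_of_neg hν (not_le.1 hz0) ▸ hz)

lemma generalizedInverse_cdf_nonneg (hν : ν (Icc 0 1)ᶜ = 0) (c : ℝ) :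
    0 ≤ generalizedInverse (cdf ν) c := by
  rcases le_or_gt c 0 with hc | hc
  · rw [generalizedInverse_cdf_of_nonpos hc]
  · exact Real.sInf_nonneg fun z hz => setOf_le_cdf_subset_Ici hν hc hz

lemma generalizedInverse_cdf_le_iff (hν : ν (Icc 0 1)ᶜ = 0) {c u : ℝ} (hc : c ≤ 1)
    (hu : 0 ≤ u) : generalizedInverse (cdf ν) c ≤ u ↔ c ≤ cdf ν u := by
  rcases le_or_gt c 0 with hc0 | hc0
  · rw [generalizedInverse_cdf_of_nonpos hc0]
    exact iff_of_true hu (hc0.trans (cdf_nonneg ν u))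
  · exact generalizedInverse_le_iff (monotone_cdf ν) ((cdf ν).right_continuous u)
      ⟨1, show c ≤ cdf ν 1 by rwa [cdf_one_eq_one hν]⟩ ⟨0, setOf_le_cdf_subset_Ici hν hc0⟩

end UnitInterval

lemma measure_cdf_le_eq_ofReal {μ : Measure ℝ} [IsProbabilityMeasure μ] {a b : ℝ} (hab : a ≤ b)
    (hsupp : μ (Icc a b)ᶜ = 0) (hcont : ContinuousOn (cdf μ) (Icc a b))
    (hstrict : StrictMonoOn (cdf μ) (Icc a b)) (ha : cdf μ a = 0) (hb : cdf μ b = 1) {c : ℝ}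
    (hc : c ∈ Icc 0 1) : μ {θ | cdf μ θ ≤ c} = ENNReal.ofReal c := by
  obtain ⟨t, ht, rfl⟩ := intermediate_value_Icc hab hcont (ha ▸ hb ▸ hc)
  have hset : {θ | cdf μ θ ≤ cdf μ t} ∩ Icc a b = Iic t ∩ Icc a b := by
    ext θ
    simp only [mem_inter_iff, mem_ofPred_eq, mem_Iic, and_congr_left_iff]
    exact fun hθ => hstrict.le_iff_le hθ ht
  rw [← measure_inter_conull hsupp, hset, measure_inter_conull hsupp, ofReal_cdf]

section Rearrangement

variable {μ ν : Measure ℝ} [IsProbabilityMeasure ν]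

lemma generalizedInverse_cdf_le_one (hν : ν (Icc 0 1)ᶜ = 0) {c : ℝ} (hc : c ≤ 1) :
    generalizedInverse (cdf ν) c ≤ 1 :=
  (generalizedInverse_cdf_le_iff hν hc zero_le_one).2 (by rwa [cdf_one_eq_one hν])

lemma monotoneOn_generalizedInverse_cdf (hν : ν (Icc 0 1)ᶜ = 0) :
    MonotoneOn (generalizedInverse (cdf ν)) (Iic 1) := fun c hc d hd hcd => by
  have hd0 := generalizedInverse_cdf_nonneg hν d
  rw [generalizedInverse_cdf_le_iff hν hc hd0]
  exact hcd.trans ((generalizedInverse_cdf_le_iff hν hd hd0).1 le_rfl)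

lemma monotone_generalizedInverse_cdf_comp_cdf (hν : ν (Icc 0 1)ᶜ = 0) :
    Monotone fun θ => generalizedInverse (cdf ν) (cdf μ θ) := fun _ _ hθ =>
  monotoneOn_generalizedInverse_cdf hν (cdf_le_one μ _) (cdf_le_one μ _) (monotone_cdf μ hθ)

lemma map_generalizedInverse_cdf_comp_cdf [IsProbabilityMeasure μ] {a b : ℝ} (hab : a ≤ b)
    (hsupp : μ (Icc a b)ᶜ = 0) (hcont : ContinuousOn (cdf μ) (Icc a b))
    (hstrict : StrictMonoOn (cdf μ) (Icc a b)) (ha : cdf μ a = 0) (hb : cdf μ b = 1)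
    (hν : ν (Icc 0 1)ᶜ = 0) : μ.map (fun θ => generalizedInverse (cdf ν) (cdf μ θ)) = ν := by
  refine Measure.ext_of_Iic _ _ fun u => ?_
  rw [Measure.map_apply (monotone_generalizedInverse_cdf_comp_cdf hν).measurable
    measurableSet_Iic, ← ofReal_cdf]
  rcases lt_or_ge u 0 with hu | hu
  · have hempty : (fun θ => generalizedInverse (cdf ν) (cdf μ θ)) ⁻¹' Iic u = ∅ :=
      eq_empty_of_forall_notMem fun θ hθ =>
        (hu.trans_le (generalizedInverse_cdf_nonneg hν _)).not_ge hθ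
    rw [hempty, measure_empty, cdf_eq_zero_of_neg hν hu, ENNReal.ofReal_zero]
  · have hset : (fun θ => generalizedInverse (cdf ν) (cdf μ θ)) ⁻¹' Iic u
        = {θ | cdf μ θ ≤ cdf ν u} :=
      ext fun θ => generalizedInverse_cdf_le_iff hν (cdf_le_one μ θ) hu
    rw [hset, measure_cdf_le_eq_ofReal hab hsupp hcont hstrict ha hb
      ⟨cdf_nonneg ν u, cdf_le_one ν u⟩]

end Rearrangement

theorem integral_id_mul_le_of_monotone_of_map_eq {μ : Measure ℝ} [IsFiniteMeasure μ]
    {a b C : ℝ} (hsupp : ∀ᵐ θ ∂μ, θ ∈ Icc a b) {g h : ℝ → ℝ} (hg : Measurable g)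
    (hh_mono : Monotone h) (hgC : ∀ θ, g θ ∈ Icc 0 C) (hhC : ∀ θ, h θ ∈ Icc 0 C)
    (hgh : μ.map g = μ.map h) : ∫ θ, θ * g θ ∂μ ≤ ∫ θ, θ * h θ ∂μ := by
  have hh : Measurable h := hh_mono.measurable
  have hbdd {k : ℝ → ℝ} (hk : Measurable k) (hkC : ∀ θ, k θ ∈ Icc 0 C) :
      Integrable k μ ∧ Integrable (fun θ => (θ - a) * k θ) μ := by
    refine ⟨.of_mem_Icc 0 C hk.aemeasurable (ae_of_all _ hkC), ?_⟩
    have hid : Integrable (fun θ => θ - a) μ :=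
      (Integrable.of_mem_Icc a b aemeasurable_id hsupp).sub (integrable_const a)
    refine hid.mul_bdd (c := C) hk.aestronglyMeasurable (ae_of_all _ fun θ => ?_)
    rw [Real.norm_eq_abs, abs_of_nonneg (hkC θ).1]
    exact (hkC θ).2
  have hshift {k : ℝ → ℝ} (hk : Measurable k) (hkC : ∀ θ, k θ ∈ Icc 0 C) :
      ∫ θ, θ * k θ ∂μ = ∫ θ, (θ - a) * k θ ∂μ + a * ∫ θ, k θ ∂μ := by
    rw [← integral_const_mul, ← integral_add (hbdd hk hkC).2 ((hbdd hk hkC).1.const_mul a)]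
    congr 1 with θ
    ring
  have hint : ∫ θ, g θ ∂μ = ∫ θ, h θ ∂μ := by
    have hmap {k : ℝ → ℝ} (hk : Measurable k) : ∫ θ, k θ ∂μ = ∫ x, x ∂(μ.map k) :=
      (integral_map (f := fun x => x) hk.aemeasurable aestronglyMeasurable_id).symm
    rw [hmap hg, hmap hh, hgh]
  have hHL : ∫ θ, (θ - a) * g θ ∂μ ≤ ∫ θ, (θ - a) * h θ ∂μ := by
    refine integral_mul_le_of_monotone (fun _ _ hθ => sub_le_sub_right hθ a) hh_mono
      (measurable_id.sub_const a) hg hh (hsupp.mono fun θ hθ => sub_nonneg.2 hθ.1)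
      (ae_of_all _ fun θ => (hgC θ).1) (ae_of_all _ fun θ => (hhC θ).1) (fun u _ => ?_)
      (hbdd hh hhC).2
    change μ (g ⁻¹' Ioi u) ≤ μ (h ⁻¹' Ioi u)
    rw [← Measure.map_apply hg measurableSet_Ioi, hgh, Measure.map_apply hh measurableSet_Ioi]
  rw [hshift hg hgC, hshift hh hhC, hint]
  linarith

/-- Hardy–Littlewood inequality for the monotone rearrangement
Q†(θ) = G⁻¹(F(θ)): rearranging the allocation weakly increases ∫ θ·Q(θ) dF(θ). -/
theorem stmt_4 (a b : ℝ) (hab : a < b)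
    (μ : Measure ℝ) [IsProbabilityMeasure μ]
    (hsupp : μ (Set.Icc a b)ᶜ = 0)
    (F Q Qdag G : ℝ → ℝ)
    (hF : ∀ θ, F θ = (μ (Set.Iic θ)).toReal)
    (hFcont : ContinuousOn F (Set.Icc a b))
    (hFstrict : StrictMonoOn F (Set.Icc a b))
    (hFa : F a = 0) (hFb : F b = 1)
    (hQmeas : Measurable Q)
    (hQrange : ∀ θ, Q θ ∈ Set.Icc (0:ℝ) 1)
    (hG : ∀ z, G z = (μ {t | Q t ≤ z}).toReal)
    (hQdag : ∀ θ, Qdag θ = sInf {z : ℝ | F θ ≤ G z}) :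
    ∫ θ, θ * Q θ ∂μ ≤ ∫ θ, θ * Qdag θ ∂μ := by
  have := Measure.isProbabilityMeasure_map (μ := μ) hQmeas.aemeasurable
  obtain rfl : F = cdf μ := funext fun θ => by rw [hF, cdf_eq_real, measureReal_def]
  obtain rfl : G = cdf (μ.map Q) := funext fun z => by
    rw [hG, cdf_eq_real, map_measureReal_apply hQmeas measurableSet_Iic, measureReal_def]; rfl
  obtain rfl : Qdag = fun θ => generalizedInverse (cdf (μ.map Q)) (cdf μ θ) := funext hQdag
  have hν : μ.map Q (Icc 0 1)ᶜ = 0 := by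
    rw [Measure.map_apply hQmeas measurableSet_Icc.compl]
    exact measure_mono_null (fun θ hθ => hθ (hQrange θ)) measure_empty
  refine integral_id_mul_le_of_monotone_of_map_eq (ae_iff.2 hsupp) hQmeas
    (monotone_generalizedInverse_cdf_comp_cdf hν) hQrange (fun θ =>
      ⟨generalizedInverse_cdf_nonneg hν _, generalizedInverse_cdf_le_one hν (cdf_le_one μ θ)⟩) ?_
  rw [map_generalizedInverse_cdf_comp_cdf hab.le hsupp hFcont hFstrict hFa hFb hν]
end

section
/- Consider a single agent whose type θ is uniform on [0,1], with marginal cost η = 1 and contest rule x(s) = min(1, s). Then the strategy s(θ) = 1 − θ for θ ≤ 1/2 and s(θ) = θ for θ > 1/2 is a best response for every type: for every θ ∈ [0,1] and every s' ≥ 0, x(s(θ)) − max(0, s(θ) − θ) ≥ x(s') − max(0, s' − θ). Moreover, the induced interim allocation Q(θ) = x(s(θ)) equals 1 − θ on [0,1/2] (strictly decreasing) and θ on (1/2,1] (strictly increasing). -/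
/-- single agent, uniform type on [0,1], η = 1, contest rule
x(s) = min(1,s): the strategy s(θ) = 1−θ for θ ≤ 1/2 and s(θ) = θ otherwise is
a best response for every type, and the induced interim allocation is
non-monotone: strictly decreasing on [0,1/2], strictly increasing on (1/2,1]. -/
theorem stmt_19 (x s Q : ℝ → ℝ)
    (hx : ∀ t, x t = min 1 t)
    (hs : ∀ θ, s θ = if θ ≤ 1/2 then 1 - θ else θ)
    (hQ : ∀ θ, Q θ = x (s θ)) :
    (∀ θ ∈ Set.Icc (0:ℝ) 1, ∀ s' : ℝ, 0 ≤ s' →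
      x s' - max 0 (s' - θ) ≤ x (s θ) - max 0 (s θ - θ)) ∧
    (∀ θ ∈ Set.Icc (0:ℝ) (1/2), Q θ = 1 - θ) ∧
    (∀ θ ∈ Set.Ioc (1/2:ℝ) 1, Q θ = θ) ∧
    StrictAntiOn Q (Set.Icc 0 (1/2)) ∧
    StrictMonoOn Q (Set.Ioc (1/2:ℝ) 1) := by
  have key : ∀ θ ∈ Set.Icc (0:ℝ) 1, x (s θ) - max 0 (s θ - θ) = θ := by
    intro θ ⟨h0, h1⟩
    rw [hs θ, hx]
    by_cases h : θ ≤ 1/2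
    · rw [if_pos h, min_eq_right (by linarith), max_eq_right (by linarith)]; ring
    · rw [if_neg h, min_eq_right h1, max_eq_left (by linarith)]; ring
  refine ⟨?_, ?_, ?_, ?_, ?_⟩
  · intro θ hθ s' hs'
    rw [key θ hθ, hx]
    rcases le_or_gt s' θ with h | h
    · calc min 1 s' - max 0 (s' - θ) ≤ s' - 0 := by
            gcongr; exacts [min_le_right _ _, le_max_left _ _]
        _ ≤ θ := by linarith
    · calc min 1 s' - max 0 (s' - θ) ≤ s' - (s' - θ) := by
            gcongr; exacts [min_le_right _ _, le_max_right _ _]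
        _ = θ := by ring
  · intro θ ⟨h0, h1⟩
    rw [hQ, hs, if_pos h1, hx, min_eq_right (by linarith)]
  · intro θ ⟨h0, h1⟩
    rw [hQ, hs, if_neg (not_le.2 h0), hx, min_eq_right h1]
  · intro a ⟨ha0, ha1⟩ b ⟨hb0, hb1⟩ hab
    rw [hQ, hQ, hs, hs, if_pos ha1, if_pos hb1, hx, hx,
      min_eq_right (by linarith), min_eq_right (by linarith)]
    linarith
  · intro a ⟨ha0, ha1⟩ b ⟨hb0, hb1⟩ hab
    rw [hQ, hQ, hs, hs, if_neg (not_le.2 ha0), if_neg (not_le.2 hb0), hx, hx,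
      min_eq_right ha1, min_eq_right hb1]
    exact hab
end
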